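/- arXiv:1811.11502 — 2 statements merged into one kernel-verified Lean document; each statement's English description precedes it below -/
import Mathlib

section
/- (Energy dissipation for the sweeping dimensional splitting scheme S1.) Let N ≥ 2, Δx, Δy, Δt > 0, H : ℝ → ℝ convex and differentiable, V ∈ ℝ^{N×N}, and w : ℤ² → ℝ with w(p,q) = w(−p,q) = w(p,−q). Consider the sweeping S1 scheme: an x-sweep ρ^{n,(0)} = ρⁿ, ρ^{n,(1)}, …, ρ^{n,(N)} = ρ^{n+1/2} in which at stage r only row j = r is updated via ρ^{n,(r)}_{i,r} = ρ^{n,(r−1)}_{i,r} − (Δt/Δx)(F^{(r)}_{i+1/2,r} − F^{(r)}_{i−1/2,r}), with F^{(r)}_{i+1/2,r} = ρ^{E,(r)}_{i,r}(u^{(r)}_{i+1/2,r})⁺ + ρ^{W,(r)}_{i+1,r}(u^{(r)}_{i+1/2,r})⁻ (zero boundary fluxes), ρ^{E,(r)}, ρ^{W,(r)} the second-order minmod reconstructions (θ = 2, mesh Δx) of row r of ρ^{n,(r)}, u^{(r)}_{i+1/2,r} = −(ξ^{(r)}_{i+1,r} − ξ^{(r)}_{i,r})/Δx, ξ^{(r)}_{i,j}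 = H'(ρ^{n,(r)}_{i,j}) + V_{ij} + ΔxΔy·∑_{k,l} w(i−k,j−l)·ρ̂^{(r)}_{k,l}, where ρ̂^{(r)}_{k,l} = ρ^{**,(r)}_{k,l} if l = r and ρ̂^{(r)}_{k,l} = ρ^{n,(r−1)}_{k,l} otherwise; followed by an analogous column-by-column y-sweep ρ^{n+1/2,(0)} = ρ^{n+1/2}, …, ρ^{n+1/2,(N)} = ρⁿ⁺¹ with convolution variable equal to ρ^{***,(r)} on column k = r and ρ^{n+1/2,(r−1)} elsewhere. Assume all iterates at all stages have nonnegative entries (guaranteed under the CFL condition 2Δt·max((u^{(r)})⁺, −(u^{(r)})⁻) ≤ Δx and 2Δt·max((v^{(r)})⁺, −(v^{(r)})⁻) ≤ Δy when ρⁿ ≥ 0). If for every r one of the following holds: (i) ρ^{**,(r)} = (ρ^{n,(r)} + ρ^{n,(r−1)})/2 and ρ^{***,(r)} = (ρ^{n+1/2,(r)} + ρ^{n+1/2,(r−1)})/2 (any kernel); (ii) ρ^{**,(r)} = ρ^{n,(r−1)} and ρ^{***,(r)} = ρ^{n+1/2,(r−1)} and the kernel w is negative definite; (iii) ρ^{**,(r)}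 = ρ^{n,(r)} and ρ^{***,(r)} = ρ^{n+1/2,(r)} and the kernel w is positive definite; then E_Δ(ρⁿ⁺¹) ≤ E_Δ(ρⁿ); indeed the discrete energy decreases at every individual stage of both sweeps. -/
/-- The minmod limiter: `min` if all arguments are positive, `max` if all are negative,
and `0` otherwise. -/
noncomputable def minmod3 (a b c : ℝ) : ℝ :=
  if 0 < a ∧ 0 < b ∧ 0 < c then min a (min b c)
  else if a < 0 ∧ b < 0 ∧ c < 0 then max a (max b c)
  else 0

/-- The minmod mslope (θ = 2, mesh `dx`) of a vector `ρ` indexed by `1,…,N`: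
interior cells `2 ≤ i ≤ N−1` use the minmod limiter; the first and last cells get `0`. -/
noncomputable def mslope (N : ℕ) (dx : ℝ) (ρ : ℕ → ℝ) (i : ℕ) : ℝ :=
  if 2 ≤ i ∧ i ≤ N - 1 then
    minmod3 (2 * (ρ (i + 1) - ρ i) / dx)
      ((ρ (i + 1) - ρ (i - 1)) / (2 * dx))
      (2 * (ρ i - ρ (i - 1)) / dx)
  else 0

/-- East reconstruction: `ρᴱ_i = ρ_i + (dx/2)·σ_i`. -/
noncomputable def recE (N : ℕ) (dx : ℝ) (ρ : ℕ → ℝ) (i : ℕ) : ℝ :=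
  ρ i + dx / 2 * mslope N dx ρ i

/-- West reconstruction: `ρᵂ_i = ρ_i − (dx/2)·σ_i`. -/
noncomputable def recW (N : ℕ) (dx : ℝ) (ρ : ℕ → ℝ) (i : ℕ) : ℝ :=
  ρ i - dx / 2 * mslope N dx ρ i

/-- Positive part `z⁺ = max(z,0)`. -/
noncomputable def pospart (z : ℝ) : ℝ := max z 0

/-- Negative part `z⁻ = min(z,0)`. -/
noncomputable def negpart (z : ℝ) : ℝ := min z 0

/-- The two-dimensional discrete free energy
`E_Δ(ρ) = ΔxΔy·(∑ H(ρ_{ij}) + ∑ V_{ij}ρ_{ij} + (ΔxΔy/2)·∑ w(i−k,j−l)ρ_{ij}ρ_{kl})`. -/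
noncomputable def Edisc2 (N : ℕ) (dx dy : ℝ) (H : ℝ → ℝ) (V : ℕ → ℕ → ℝ)
    (w : ℤ → ℤ → ℝ) (ρ : ℕ → ℕ → ℝ) : ℝ :=
  dx * dy * ((∑ i ∈ Finset.Icc 1 N, ∑ j ∈ Finset.Icc 1 N, H (ρ i j))
    + (∑ i ∈ Finset.Icc 1 N, ∑ j ∈ Finset.Icc 1 N, V i j * ρ i j)
    + dx * dy / 2 * ∑ i ∈ Finset.Icc 1 N, ∑ j ∈ Finset.Icc 1 N,
        ∑ k ∈ Finset.Icc 1 N, ∑ l ∈ Finset.Icc 1 N,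
          w ((i : ℤ) - (k : ℤ)) ((j : ℤ) - (l : ℤ)) * ρ i j * ρ k l)

/-- The kernel `w` is negative definite: `∑ w(i−k,j−l)(a_{ij}−b_{ij})(a_{kl}−b_{kl}) ≤ 0`
for all matrices `a, b` with nonnegative entries. -/
def NegDefKer2 (N : ℕ) (w : ℤ → ℤ → ℝ) : Prop :=
  ∀ a b : ℕ → ℕ → ℝ,
    (∀ i j, 1 ≤ i → i ≤ N → 1 ≤ j → j ≤ N → 0 ≤ a i j) →
    (∀ i j, 1 ≤ i → i ≤ N → 1 ≤ j → j ≤ N → 0 ≤ b i j) →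
    ∑ i ∈ Finset.Icc 1 N, ∑ j ∈ Finset.Icc 1 N,
      ∑ k ∈ Finset.Icc 1 N, ∑ l ∈ Finset.Icc 1 N,
        w ((i : ℤ) - (k : ℤ)) ((j : ℤ) - (l : ℤ))
          * (a i j - b i j) * (a k l - b k l) ≤ 0

/-- The kernel `w` is positive definite: `∑ w(i−k,j−l)(a_{ij}−b_{ij})(a_{kl}−b_{kl}) ≥ 0`
for all matrices `a, b` with nonnegative entries. -/
def PosDefKer2 (N : ℕ) (w : ℤ → ℤ → ℝ) : Prop :=
  ∀ a b : ℕ → ℕ → ℝ,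
    (∀ i j, 1 ≤ i → i ≤ N → 1 ≤ j → j ≤ N → 0 ≤ a i j) →
    (∀ i j, 1 ≤ i → i ≤ N → 1 ≤ j → j ≤ N → 0 ≤ b i j) →
    0 ≤ ∑ i ∈ Finset.Icc 1 N, ∑ j ∈ Finset.Icc 1 N,
      ∑ k ∈ Finset.Icc 1 N, ∑ l ∈ Finset.Icc 1 N,
        w ((i : ℤ) - (k : ℤ)) ((j : ℤ) - (l : ℤ))
          * (a i j - b i j) * (a k l - b k l)

/-!
Each stage changes a single row (x-sweep) or column (y-sweep). By convexity of `H`, and because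
the convolution variable is either the midpoint (an exact identity for the interaction term) or
the old/new state under a definite kernel, the energy change is at most `ΔxΔy ∑ ξ (ρ_new - ρ_old)`.
On the active line the update is conservative, so summation by parts turns this sum into
`-Δt ∑ u_{i+1/2} F_{i+1/2}`, which is nonpositive: an upwind flux built from nonnegative
reconstructions has the sign of the velocity, and the minmod reconstructions of a nonnegative
vector are nonnegative.
-/

open Finset

theorem ConvexOn.sub_le_deriv_mul_sub {S : Set ℝ} {f : ℝ → ℝ} {x y : ℝ} (hf : ConvexOn ℝ S f)
    (hx : x ∈ S) (hy : y ∈ S) (hd : DifferentiableAt ℝ f y) :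
    f y - f x ≤ deriv f y * (y - x) := by
  rcases lt_trichotomy x y with hxy | rfl | hxy
  · have := hf.slope_le_deriv hx hy hxy hd
    rw [slope_def_field, div_le_iff₀ (sub_pos.mpr hxy)] at this
    linarith
  · simp
  · have := hf.deriv_le_slope hy hx hxy hd
    rw [slope_def_field, le_div_iff₀ (sub_pos.mpr hxy)] at this
    linarith

theorem minmod3_le_max_zero_right (a b c : ℝ) : minmod3 a b c ≤ max c 0 := by
  unfold minmod3
  split_ifs with _ hneg
  · exact (min_le_right _ _).trans ((min_le_right _ _).trans (le_max_left _ _))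
  · exact (max_lt hneg.1 (max_lt hneg.2.1 hneg.2.2)).le.trans (le_max_right _ _)
  · exact le_max_right _ _

theorem min_zero_left_le_minmod3 (a b c : ℝ) : min a 0 ≤ minmod3 a b c := by
  unfold minmod3
  split_ifs with hpos
  · exact (min_le_right _ _).trans (le_min hpos.1.le (le_min hpos.2.1.le hpos.2.2.le))
  · exact (min_le_left _ _).trans (le_max_left _ _)
  · exact min_le_right _ _

theorem abs_half_mul_mslope_le {N : ℕ} {dx : ℝ} (hdx : 0 < dx) {ρ : ℕ → ℝ}
    (hρ : ∀ k, 1 ≤ k → k ≤ N → 0 ≤ ρ k) {i : ℕ} (hi1 : 1 ≤ i) (hiN : i ≤ N) :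
    |dx / 2 * mslope N dx ρ i| ≤ ρ i := by
  unfold mslope
  split_ifs with hint
  · set A := 2 * (ρ (i + 1) - ρ i) / dx with hAdef
    set C := 2 * (ρ i - ρ (i - 1)) / dx with hCdef
    set σ := minmod3 A ((ρ (i + 1) - ρ (i - 1)) / (2 * dx)) C
    have hdx2 : 0 ≤ dx / 2 := by positivity
    have hA : dx / 2 * A = ρ (i + 1) - ρ i := by rw [hAdef]; field_simp
    have hC : dx / 2 * C = ρ i - ρ (i - 1) := by rw [hCdef]; field_simp
    have hup : dx / 2 * σ ≤ max (ρ i - ρ (i - 1)) 0 := calc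
      dx / 2 * σ ≤ dx / 2 * max C 0 :=
        mul_le_mul_of_nonneg_left (minmod3_le_max_zero_right _ _ _) hdx2
      _ = max (ρ i - ρ (i - 1)) 0 := by rw [mul_max_of_nonneg _ _ hdx2, hC, mul_zero]
    have hlow : min (ρ (i + 1) - ρ i) 0 ≤ dx / 2 * σ := calc
      min (ρ (i + 1) - ρ i) 0 = dx / 2 * min A 0 := by
        rw [mul_min_of_nonneg _ _ hdx2, hA, mul_zero]
      _ ≤ dx / 2 * σ := mul_le_mul_of_nonneg_left (min_zero_left_le_minmod3 _ _ _) hdx2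
    have hprev := hρ (i - 1) (by omega) (by omega)
    have hnext := hρ (i + 1) (by omega) (by omega)
    have hmid := hρ i hi1 hiN
    rw [abs_le]
    constructor
    · linarith [le_min (by linarith : -ρ i ≤ ρ (i + 1) - ρ i) (neg_nonpos.mpr hmid)]
    · linarith [max_le (by linarith : ρ i - ρ (i - 1) ≤ ρ i) hmid]
  · simpa using hρ i hi1 hiN

theorem recE_nonneg {N : ℕ} {dx : ℝ} (hdx : 0 < dx) {ρ : ℕ → ℝ}
    (hρ : ∀ k, 1 ≤ k → k ≤ N → 0 ≤ ρ k) {i : ℕ} (hi1 : 1 ≤ i) (hiN : i ≤ N) :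
    0 ≤ recE N dx ρ i := by
  have := (abs_le.mp (abs_half_mul_mslope_le hdx hρ hi1 hiN)).1
  unfold recE
  linarith

theorem recW_nonneg {N : ℕ} {dx : ℝ} (hdx : 0 < dx) {ρ : ℕ → ℝ}
    (hρ : ∀ k, 1 ≤ k → k ≤ N → 0 ≤ ρ k) {i : ℕ} (hi1 : 1 ≤ i) (hiN : i ≤ N) :
    0 ≤ recW N dx ρ i := by
  have := (abs_le.mp (abs_half_mul_mslope_le hdx hρ hi1 hiN)).2
  unfold recW
  linarith

theorem mul_upwindFlux_nonneg {E W : ℝ} (hE : 0 ≤ E) (hW : 0 ≤ W) (u : ℝ) :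
    0 ≤ u * (E * pospart u + W * negpart u) := by
  unfold pospart negpart
  rcases le_total 0 u with hu | hu
  · rw [max_eq_left hu, min_eq_right hu]
    nlinarith [mul_nonneg hE (mul_self_nonneg u)]
  · rw [max_eq_right hu, min_eq_left hu]
    nlinarith [mul_nonneg hW (mul_self_nonneg u)]

theorem sum_Icc_mul_sub_pred_eq (ξ F : ℕ → ℝ) (m : ℕ) :
    ∑ i ∈ Icc 1 (m + 1), ξ i * (F i - F (i - 1))
      = ξ (m + 1) * F (m + 1) - ξ 1 * F 0 + ∑ i ∈ Icc 1 m, (ξ i - ξ (i + 1)) * F i := by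
  induction m with
  | zero =>
    simp only [zero_add, Icc_self, sum_singleton, tsub_self, Order.lt_one_iff, Icc_eq_empty_of_lt,
      sum_empty, add_zero]
    ring
  | succ n ih =>
    rw [sum_Icc_succ_top (by omega), ih, sum_Icc_succ_top (by omega), Nat.add_sub_cancel]
    ring

theorem sum_Icc_mul_sub_pred_eq_of_boundary {ξ F : ℕ → ℝ} {N : ℕ} (hF0 : F 0 = 0)
    (hFN : F N = 0) :
    ∑ i ∈ Icc 1 N, ξ i * (F i - F (i - 1)) = ∑ i ∈ Icc 1 (N - 1), (ξ i - ξ (i + 1)) * F i := by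
  cases N with
  | zero => simp
  | succ m => rw [sum_Icc_mul_sub_pred_eq, hF0, hFN, Nat.add_sub_cancel]; ring

theorem sum_mul_sub_nonpos_of_upwind_update {N : ℕ} {h dt : ℝ} (hh : 0 < h) (hdt : 0 ≤ dt)
    {ρ a ξ u F : ℕ → ℝ} (hρ : ∀ i, 1 ≤ i → i ≤ N → 0 ≤ ρ i)
    (hu : ∀ i, 1 ≤ i → i ≤ N - 1 → u i = -(ξ (i + 1) - ξ i) / h)
    (hF : ∀ i, 1 ≤ i → i ≤ N - 1 →
      F i = recE N h ρ i * pospart (u i) + recW N h ρ (i + 1) * negpart (u i))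
    (hF0 : F 0 = 0) (hFN : F N = 0)
    (hupd : ∀ i, 1 ≤ i → i ≤ N → ρ i = a i - dt / h * (F i - F (i - 1))) :
    ∑ i ∈ Icc 1 N, ξ i * (ρ i - a i) ≤ 0 := by
  have hflux : ∀ i ∈ Icc 1 (N - 1), 0 ≤ u i * F i := fun i hi => by
    obtain ⟨hi1, hiN⟩ := mem_Icc.mp hi
    rw [hF i hi1 hiN]
    exact mul_upwindFlux_nonneg (recE_nonneg hh hρ hi1 (by omega))
      (recW_nonneg hh hρ (by omega) (by omega)) (u i)
  calc ∑ i ∈ Icc 1 N, ξ i * (ρ i - a i)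
      = -(dt / h) * ∑ i ∈ Icc 1 N, ξ i * (F i - F (i - 1)) := by
        rw [mul_sum]
        refine sum_congr rfl fun i hi => ?_
        rw [hupd i (mem_Icc.mp hi).1 (mem_Icc.mp hi).2]
        ring
    _ = -dt * ∑ i ∈ Icc 1 (N - 1), u i * F i := by
        rw [sum_Icc_mul_sub_pred_eq_of_boundary hF0 hFN, mul_sum, mul_sum]
        refine sum_congr rfl fun i hi => ?_
        rw [hu i (mem_Icc.mp hi).1 (mem_Icc.mp hi).2]
        field_simp
        ring
    _ ≤ 0 := mul_nonpos_of_nonpos_of_nonneg (neg_nonpos.mpr hdt) (sum_nonneg hflux)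

noncomputable def kerForm (N : ℕ) (w : ℤ → ℤ → ℝ) (f g : ℕ → ℕ → ℝ) : ℝ :=
  ∑ i ∈ Icc 1 N, ∑ j ∈ Icc 1 N, ∑ k ∈ Icc 1 N, ∑ l ∈ Icc 1 N,
    w ((i : ℤ) - (k : ℤ)) ((j : ℤ) - (l : ℤ)) * f i j * g k l

noncomputable def kerConv (N : ℕ) (w : ℤ → ℤ → ℝ) (g : ℕ → ℕ → ℝ) (i j : ℕ) : ℝ :=
  ∑ k ∈ Icc 1 N, ∑ l ∈ Icc 1 N, w ((i : ℤ) - (k : ℤ)) ((j : ℤ) - (l : ℤ)) * g k l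

/-- The three admissible choices (i), (ii), (iii) of the convolution variable `ρ` for a stage
`a ↦ b`. -/
def AdmissibleConvVar (N : ℕ) (w : ℤ → ℤ → ℝ) (a b ρ : ℕ → ℕ → ℝ) : Prop :=
  (∀ k l, 1 ≤ k → k ≤ N → 1 ≤ l → l ≤ N → ρ k l = (b k l + a k l) / 2) ∨
    ((∀ k l, 1 ≤ k → k ≤ N → 1 ≤ l → l ≤ N → ρ k l = a k l) ∧ NegDefKer2 N w) ∨
    ((∀ k l, 1 ≤ k → k ≤ N → 1 ≤ l → l ≤ N → ρ k l = b k l) ∧ PosDefKer2 N w)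

section KerForm

variable {N : ℕ} {w : ℤ → ℤ → ℝ}

theorem kerForm_comm (hw : ∀ p q : ℤ, w (-p) (-q) = w p q) (f g : ℕ → ℕ → ℝ) :
    kerForm N w f g = kerForm N w g f := by
  unfold kerForm
  simp only [← sum_product' (s := Icc 1 N) (t := Icc 1 N)]
  rw [sum_comm]
  refine sum_congr rfl fun p _ => sum_congr rfl fun q _ => ?_
  rw [← hw, neg_sub, neg_sub]
  ring

theorem kerForm_sub_left (f g h : ℕ → ℕ → ℝ) :
    kerForm N w (f - g) h = kerForm N w f h - kerForm N w g h := by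
  simp only [kerForm, ← sum_sub_distrib, Pi.sub_apply, sub_mul, mul_sub]

theorem kerForm_sub_right (f g h : ℕ → ℕ → ℝ) :
    kerForm N w f (g - h) = kerForm N w f g - kerForm N w f h := by
  simp only [kerForm, ← sum_sub_distrib, Pi.sub_apply, mul_sub]

theorem kerForm_congr_right {f g g' : ℕ → ℕ → ℝ}
    (hg : ∀ k l, 1 ≤ k → k ≤ N → 1 ≤ l → l ≤ N → g k l = g' k l) :
    kerForm N w f g = kerForm N w f g' := by
  unfold kerForm
  refine sum_congr rfl fun i _ => sum_congr rfl fun j _ =>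
    sum_congr rfl fun k hk => sum_congr rfl fun l hl => ?_
  rw [hg k l (mem_Icc.mp hk).1 (mem_Icc.mp hk).2 (mem_Icc.mp hl).1 (mem_Icc.mp hl).2]

theorem kerForm_midpoint_right (f g h : ℕ → ℕ → ℝ) :
    kerForm N w f (fun k l => (g k l + h k l) / 2) = (kerForm N w f g + kerForm N w f h) / 2 := by
  simp only [kerForm, sum_div, ← sum_add_distrib]
  refine sum_congr rfl fun i _ => sum_congr rfl fun j _ =>
    sum_congr rfl fun k _ => sum_congr rfl fun l _ => by ring

theorem kerForm_eq_sum_mul_kerConv (f g : ℕ → ℕ → ℝ) :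
    kerForm N w f g = ∑ i ∈ Icc 1 N, ∑ j ∈ Icc 1 N, f i j * kerConv N w g i j := by
  simp only [kerForm, kerConv, mul_sum]
  refine sum_congr rfl fun i _ => sum_congr rfl fun j _ =>
    sum_congr rfl fun k _ => sum_congr rfl fun l _ => by ring

end KerForm

section Energy

variable {N : ℕ} {w : ℤ → ℤ → ℝ}

theorem AdmissibleConvVar.ite {P : ℕ → ℕ → Prop} [DecidableRel P] {a b ρ : ℕ → ℕ → ℝ}
    (hρ : AdmissibleConvVar N w a b ρ)
    (hkeep : ∀ k l, 1 ≤ k → k ≤ N → 1 ≤ l → l ≤ N → ¬ P k l → b k l = a k l) :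
    AdmissibleConvVar N w a b (fun k l => if P k l then ρ k l else a k l) := by
  rcases hρ with hmid | ⟨hold, hneg⟩ | ⟨hnew, hpos⟩
  · refine Or.inl fun k l hk1 hkN hl1 hlN => ?_
    dsimp only
    split_ifs with hP
    · exact hmid k l hk1 hkN hl1 hlN
    · rw [hkeep k l hk1 hkN hl1 hlN hP]
      ring
  · refine Or.inr (Or.inl ⟨fun k l hk1 hkN hl1 hlN => ?_, hneg⟩)
    dsimp only
    split_ifs
    exacts [hold k l hk1 hkN hl1 hlN, rfl]
  · refine Or.inr (Or.inr ⟨fun k l hk1 hkN hl1 hlN => ?_, hpos⟩)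
    dsimp only
    split_ifs with hP
    exacts [hnew k l hk1 hkN hl1 hlN, (hkeep k l hk1 hkN hl1 hlN hP).symm]

theorem kerForm_sub_le_of_admissible (hw : ∀ p q : ℤ, w (-p) (-q) = w p q)
    {a b ρ : ℕ → ℕ → ℝ} (ha : ∀ i j, 1 ≤ i → i ≤ N → 1 ≤ j → j ≤ N → 0 ≤ a i j)
    (hb : ∀ i j, 1 ≤ i → i ≤ N → 1 ≤ j → j ≤ N → 0 ≤ b i j)
    (hρ : AdmissibleConvVar N w a b ρ) :
    kerForm N w b b - kerForm N w a a ≤ 2 * kerForm N w (b - a) ρ := by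
  have hab := kerForm_comm (N := N) hw a b
  rcases hρ with hmid | ⟨hold, hneg⟩ | ⟨hnew, hpos⟩
  · rw [kerForm_congr_right hmid, kerForm_midpoint_right, kerForm_sub_left, kerForm_sub_left]
    linarith
  · have hdef : kerForm N w (a - b) (a - b) ≤ 0 := hneg a b ha hb
    rw [kerForm_sub_left, kerForm_sub_right, kerForm_sub_right] at hdef
    rw [kerForm_congr_right hold, kerForm_sub_left]
    linarith
  · have hdef : 0 ≤ kerForm N w (a - b) (a - b) := hpos a b ha hb
    rw [kerForm_sub_left, kerForm_sub_right, kerForm_sub_right] at hdef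
    rw [kerForm_congr_right hnew, kerForm_sub_left]
    linarith

theorem Edisc2_sub_le_sum {dx dy : ℝ} {H : ℝ → ℝ} {V : ℕ → ℕ → ℝ}
    (hH : ConvexOn ℝ Set.univ H) (hHd : Differentiable ℝ H) (hdxy : 0 ≤ dx * dy)
    {a b ρ : ℕ → ℕ → ℝ} (hker : kerForm N w b b - kerForm N w a a ≤ 2 * kerForm N w (b - a) ρ) :
    Edisc2 N dx dy H V w b - Edisc2 N dx dy H V w a ≤ dx * dy * ∑ i ∈ Icc 1 N, ∑ j ∈ Icc 1 N,
      (deriv H (b i j) + V i j + dx * dy * kerConv N w ρ i j) * (b i j - a i j) := by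
  have hentropy : ∑ i ∈ Icc 1 N, ∑ j ∈ Icc 1 N, H (b i j) - ∑ i ∈ Icc 1 N, ∑ j ∈ Icc 1 N, H (a i j)
      ≤ ∑ i ∈ Icc 1 N, ∑ j ∈ Icc 1 N, deriv H (b i j) * (b i j - a i j) := by
    rw [← sum_sub_distrib]
    refine sum_le_sum fun i _ => ?_
    rw [← sum_sub_distrib]
    exact sum_le_sum fun j _ => hH.sub_le_deriv_mul_sub (Set.mem_univ _) (Set.mem_univ _) (hHd _)
  have hsplit : ∑ i ∈ Icc 1 N, ∑ j ∈ Icc 1 N,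
      (deriv H (b i j) + V i j + dx * dy * kerConv N w ρ i j) * (b i j - a i j)
      = ∑ i ∈ Icc 1 N, ∑ j ∈ Icc 1 N, deriv H (b i j) * (b i j - a i j)
        + (∑ i ∈ Icc 1 N, ∑ j ∈ Icc 1 N, V i j * b i j
          - ∑ i ∈ Icc 1 N, ∑ j ∈ Icc 1 N, V i j * a i j)
        + dx * dy * kerForm N w (b - a) ρ := by
    simp only [kerForm_eq_sum_mul_kerConv, mul_sum, ← sum_add_distrib, ← sum_sub_distrib]
    exact sum_congr rfl fun i _ => sum_congr rfl fun j _ => by simp only [Pi.sub_apply]; ring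
  have hhalf := mul_le_mul_of_nonneg_left hker (by positivity : 0 ≤ dx * dy / 2)
  have hdiff : Edisc2 N dx dy H V w b - Edisc2 N dx dy H V w a
      = dx * dy * ((∑ i ∈ Icc 1 N, ∑ j ∈ Icc 1 N, H (b i j)
          - ∑ i ∈ Icc 1 N, ∑ j ∈ Icc 1 N, H (a i j))
        + (∑ i ∈ Icc 1 N, ∑ j ∈ Icc 1 N, V i j * b i j
          - ∑ i ∈ Icc 1 N, ∑ j ∈ Icc 1 N, V i j * a i j)
        + dx * dy / 2 * (kerForm N w b b - kerForm N w a a)) := by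
    unfold Edisc2 kerForm
    ring
  rw [hdiff, hsplit]
  refine mul_le_mul_of_nonneg_left ?_ hdxy
  linarith

end Energy

section Stage

variable {N : ℕ} {dx dy dt : ℝ} {H : ℝ → ℝ} {V : ℕ → ℕ → ℝ} {w : ℤ → ℤ → ℝ}

theorem Edisc2_le_of_row_update (hdx : 0 < dx) (hdy : 0 ≤ dy) (hdt : 0 ≤ dt)
    (hH : ConvexOn ℝ Set.univ H) (hHd : Differentiable ℝ H)
    (hw : ∀ p q : ℤ, w (-p) (-q) = w p q) {r : ℕ} (hr1 : 1 ≤ r) (hrN : r ≤ N)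
    {a b ρs : ℕ → ℕ → ℝ} {ξ u F : ℕ → ℝ}
    (ha : ∀ i j, 1 ≤ i → i ≤ N → 1 ≤ j → j ≤ N → 0 ≤ a i j)
    (hb : ∀ i j, 1 ≤ i → i ≤ N → 1 ≤ j → j ≤ N → 0 ≤ b i j)
    (hkeep : ∀ i j, 1 ≤ i → i ≤ N → 1 ≤ j → j ≤ N → j ≠ r → b i j = a i j)
    (hρs : AdmissibleConvVar N w a b ρs)
    (hξ : ∀ i, 1 ≤ i → i ≤ N → ξ i = deriv H (b i r) + V i r
      + dx * dy * kerConv N w (fun k l => if l = r then ρs k l else a k l) i r)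
    (hu : ∀ i, 1 ≤ i → i ≤ N - 1 → u i = -(ξ (i + 1) - ξ i) / dx)
    (hF : ∀ i, 1 ≤ i → i ≤ N - 1 → F i = recE N dx (fun i' => b i' r) i * pospart (u i)
      + recW N dx (fun i' => b i' r) (i + 1) * negpart (u i))
    (hF0 : F 0 = 0) (hFN : F N = 0)
    (hupd : ∀ i, 1 ≤ i → i ≤ N → b i r = a i r - dt / dx * (F i - F (i - 1))) :
    Edisc2 N dx dy H V w b ≤ Edisc2 N dx dy H V w a := by
  have hvar := Edisc2_sub_le_sum (dx := dx) (dy := dy) (V := V) hH hHd (by positivity)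
    (kerForm_sub_le_of_admissible hw ha hb (hρs.ite (P := fun _ l => l = r) hkeep))
  have hrow : ∑ i ∈ Icc 1 N, ∑ j ∈ Icc 1 N, (deriv H (b i j) + V i j
        + dx * dy * kerConv N w (fun k l => if l = r then ρs k l else a k l) i j)
        * (b i j - a i j) = ∑ i ∈ Icc 1 N, ξ i * (b i r - a i r) := by
    refine sum_congr rfl fun i hi => ?_
    obtain ⟨hi1, hiN⟩ := mem_Icc.mp hi
    rw [sum_eq_single_of_mem r (mem_Icc.mpr ⟨hr1, hrN⟩) fun j hj hjr => ?_, hξ i hi1 hiN]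
    rw [hkeep i j hi1 hiN (mem_Icc.mp hj).1 (mem_Icc.mp hj).2 hjr, sub_self, mul_zero]
  have hline := sum_mul_sub_nonpos_of_upwind_update hdx hdt (ρ := fun i => b i r)
    (fun i hi1 hiN => hb i r hi1 hiN hr1 hrN) hu hF hF0 hFN hupd
  rw [hrow] at hvar
  linarith [mul_nonpos_of_nonneg_of_nonpos (mul_nonneg hdx.le hdy) hline]

theorem Edisc2_le_of_col_update (hdx : 0 ≤ dx) (hdy : 0 < dy) (hdt : 0 ≤ dt)
    (hH : ConvexOn ℝ Set.univ H) (hHd : Differentiable ℝ H)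
    (hw : ∀ p q : ℤ, w (-p) (-q) = w p q) {r : ℕ} (hr1 : 1 ≤ r) (hrN : r ≤ N)
    {a b ρs : ℕ → ℕ → ℝ} {ξ v G : ℕ → ℝ}
    (ha : ∀ i j, 1 ≤ i → i ≤ N → 1 ≤ j → j ≤ N → 0 ≤ a i j)
    (hb : ∀ i j, 1 ≤ i → i ≤ N → 1 ≤ j → j ≤ N → 0 ≤ b i j)
    (hkeep : ∀ i j, 1 ≤ i → i ≤ N → 1 ≤ j → j ≤ N → i ≠ r → b i j = a i j)
    (hρs : AdmissibleConvVar N w a b ρs)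
    (hξ : ∀ j, 1 ≤ j → j ≤ N → ξ j = deriv H (b r j) + V r j
      + dx * dy * kerConv N w (fun k l => if k = r then ρs k l else a k l) r j)
    (hv : ∀ j, 1 ≤ j → j ≤ N - 1 → v j = -(ξ (j + 1) - ξ j) / dy)
    (hG : ∀ j, 1 ≤ j → j ≤ N - 1 → G j = recE N dy (fun j' => b r j') j * pospart (v j)
      + recW N dy (fun j' => b r j') (j + 1) * negpart (v j))
    (hG0 : G 0 = 0) (hGN : G N = 0)
    (hupd : ∀ j, 1 ≤ j → j ≤ N → b r j = a r j - dt / dy * (G j - G (j - 1))) :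
    Edisc2 N dx dy H V w b ≤ Edisc2 N dx dy H V w a := by
  have hvar := Edisc2_sub_le_sum (dx := dx) (dy := dy) (V := V) hH hHd (by positivity)
    (kerForm_sub_le_of_admissible hw ha hb
      (hρs.ite (P := fun k _ => k = r) fun k l hk1 hkN hl1 hlN => hkeep k l hk1 hkN hl1 hlN))
  have hcol : ∑ i ∈ Icc 1 N, ∑ j ∈ Icc 1 N, (deriv H (b i j) + V i j
        + dx * dy * kerConv N w (fun k l => if k = r then ρs k l else a k l) i j)
        * (b i j - a i j) = ∑ j ∈ Icc 1 N, ξ j * (b r j - a r j) := by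
    rw [sum_eq_single_of_mem r (mem_Icc.mpr ⟨hr1, hrN⟩) fun i hi hir => sum_eq_zero fun j hj => ?_]
    · refine sum_congr rfl fun j hj => ?_
      rw [hξ j (mem_Icc.mp hj).1 (mem_Icc.mp hj).2]
    · rw [hkeep i j (mem_Icc.mp hi).1 (mem_Icc.mp hi).2 (mem_Icc.mp hj).1 (mem_Icc.mp hj).2 hir,
        sub_self, mul_zero]
  have hline := sum_mul_sub_nonpos_of_upwind_update hdy hdt (ρ := fun j => b r j)
    (fun j hj1 hjN => hb r j hr1 hrN hj1 hjN) hv hG hG0 hGN hupd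
  rw [hcol] at hvar
  linarith [mul_nonpos_of_nonneg_of_nonpos (mul_nonneg hdx hdy.le) hline]

end Stage

theorem apply_le_apply_zero_of_le_pred {α : Type*} [Preorder α] {f : ℕ → α} {N : ℕ}
    (h : ∀ r, 1 ≤ r → r ≤ N → f r ≤ f (r - 1)) : f N ≤ f 0 := by
  induction N with
  | zero => exact le_rfl
  | succ n ih => exact (h (n + 1) (by omega) le_rfl).trans (ih fun r hr1 hrn => h r hr1 (by omega))

theorem Edisc2_congr {N : ℕ} {dx dy : ℝ} {H : ℝ → ℝ} {V : ℕ → ℕ → ℝ} {w : ℤ → ℤ → ℝ}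
    {ρ ρ' : ℕ → ℕ → ℝ} (h : ∀ i j, 1 ≤ i → i ≤ N → 1 ≤ j → j ≤ N → ρ i j = ρ' i j) :
    Edisc2 N dx dy H V w ρ = Edisc2 N dx dy H V w ρ' := by
  have h' : ∀ i ∈ Icc 1 N, ∀ j ∈ Icc 1 N, ρ i j = ρ' i j := fun i hi j hj =>
    h i j (mem_Icc.mp hi).1 (mem_Icc.mp hi).2 (mem_Icc.mp hj).1 (mem_Icc.mp hj).2
  unfold Edisc2
  simp +contextual only [h']

theorem stmt_15_general (N : ℕ) (dx dy dt : ℝ)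
    (hdx : 0 < dx) (hdy : 0 < dy) (hdt : 0 < dt)
    (H : ℝ → ℝ) (hHconv : ConvexOn ℝ Set.univ H) (hHdiff : Differentiable ℝ H)
    (V : ℕ → ℕ → ℝ) (w : ℤ → ℤ → ℝ)
    (hw1 : ∀ p q : ℤ, w (-p) q = w p q) (hw2 : ∀ p q : ℤ, w p (-q) = w p q)
    (ρx ρy ρss ρsss ξx ξy : ℕ → ℕ → ℕ → ℝ) (u v F G : ℕ → ℕ → ℝ)
    (hlink : ∀ i j, 1 ≤ i → i ≤ N → 1 ≤ j → j ≤ N → ρy 0 i j = ρx N i j)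
    -- x-sweep: at stage r only row j = r is updated
    (hkeepx : ∀ r, 1 ≤ r → r ≤ N → ∀ i j, 1 ≤ i → i ≤ N → 1 ≤ j → j ≤ N → j ≠ r →
      ρx r i j = ρx (r - 1) i j)
    (hξx : ∀ r, 1 ≤ r → r ≤ N → ∀ i j, 1 ≤ i → i ≤ N → 1 ≤ j → j ≤ N →
      ξx r i j = deriv H (ρx r i j) + V i j
        + dx * dy * ∑ k ∈ Finset.Icc 1 N, ∑ l ∈ Finset.Icc 1 N,
            w ((i : ℤ) - (k : ℤ)) ((j : ℤ) - (l : ℤ))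
              * (if l = r then ρss r k l else ρx (r - 1) k l))
    (hu : ∀ r, 1 ≤ r → r ≤ N → ∀ i, 1 ≤ i → i ≤ N - 1 →
      u r i = -(ξx r (i + 1) r - ξx r i r) / dx)
    (hFx : ∀ r, 1 ≤ r → r ≤ N → ∀ i, 1 ≤ i → i ≤ N - 1 →
      F r i = recE N dx (fun i' => ρx r i' r) i * pospart (u r i)
        + recW N dx (fun i' => ρx r i' r) (i + 1) * negpart (u r i))
    (hF0 : ∀ r, 1 ≤ r → r ≤ N → F r 0 = 0)
    (hFN : ∀ r, 1 ≤ r → r ≤ N → F r N = 0)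
    (hupdx : ∀ r, 1 ≤ r → r ≤ N → ∀ i, 1 ≤ i → i ≤ N →
      ρx r i r = ρx (r - 1) i r - dt / dx * (F r i - F r (i - 1)))
    -- y-sweep: at stage r only column i = r is updated
    (hkeepy : ∀ r, 1 ≤ r → r ≤ N → ∀ i j, 1 ≤ i → i ≤ N → 1 ≤ j → j ≤ N → i ≠ r →
      ρy r i j = ρy (r - 1) i j)
    (hξy : ∀ r, 1 ≤ r → r ≤ N → ∀ i j, 1 ≤ i → i ≤ N → 1 ≤ j → j ≤ N →
      ξy r i j = deriv H (ρy r i j) + V i j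
        + dx * dy * ∑ k ∈ Finset.Icc 1 N, ∑ l ∈ Finset.Icc 1 N,
            w ((i : ℤ) - (k : ℤ)) ((j : ℤ) - (l : ℤ))
              * (if k = r then ρsss r k l else ρy (r - 1) k l))
    (hv : ∀ r, 1 ≤ r → r ≤ N → ∀ j, 1 ≤ j → j ≤ N - 1 →
      v r j = -(ξy r r (j + 1) - ξy r r j) / dy)
    (hGy : ∀ r, 1 ≤ r → r ≤ N → ∀ j, 1 ≤ j → j ≤ N - 1 →
      G r j = recE N dy (fun j' => ρy r r j') j * pospart (v r j)
        + recW N dy (fun j' => ρy r r j') (j + 1) * negpart (v r j))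
    (hG0 : ∀ r, 1 ≤ r → r ≤ N → G r 0 = 0)
    (hGN : ∀ r, 1 ≤ r → r ≤ N → G r N = 0)
    (hupdy : ∀ r, 1 ≤ r → r ≤ N → ∀ j, 1 ≤ j → j ≤ N →
      ρy r r j = ρy (r - 1) r j - dt / dy * (G r j - G r (j - 1)))
    -- all iterates at all stages are nonnegative
    (hposx : ∀ r, r ≤ N → ∀ i j, 1 ≤ i → i ≤ N → 1 ≤ j → j ≤ N → 0 ≤ ρx r i j)
    (hposy : ∀ r, r ≤ N → ∀ i j, 1 ≤ i → i ≤ N → 1 ≤ j → j ≤ N → 0 ≤ ρy r i j)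
    -- admissible choice of the convolution variables, possibly different at each stage
    (hcase : ∀ r, 1 ≤ r → r ≤ N →
      ((∀ k l, 1 ≤ k → k ≤ N → 1 ≤ l → l ≤ N →
          ρss r k l = (ρx r k l + ρx (r - 1) k l) / 2) ∧
        (∀ k l, 1 ≤ k → k ≤ N → 1 ≤ l → l ≤ N →
          ρsss r k l = (ρy r k l + ρy (r - 1) k l) / 2)) ∨
      ((∀ k l, 1 ≤ k → k ≤ N → 1 ≤ l → l ≤ N → ρss r k l = ρx (r - 1) k l) ∧
        (∀ k l, 1 ≤ k → k ≤ N → 1 ≤ l → l ≤ N → ρsss r k l = ρy (r - 1) k l) ∧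
        NegDefKer2 N w) ∨
      ((∀ k l, 1 ≤ k → k ≤ N → 1 ≤ l → l ≤ N → ρss r k l = ρx r k l) ∧
        (∀ k l, 1 ≤ k → k ≤ N → 1 ≤ l → l ≤ N → ρsss r k l = ρy r k l) ∧
        PosDefKer2 N w)) :
    Edisc2 N dx dy H V w (ρy N) ≤ Edisc2 N dx dy H V w (ρx 0) ∧
    (∀ r, 1 ≤ r → r ≤ N →
      Edisc2 N dx dy H V w (ρx r) ≤ Edisc2 N dx dy H V w (ρx (r - 1)) ∧
      Edisc2 N dx dy H V w (ρy r) ≤ Edisc2 N dx dy H V w (ρy (r - 1))) := by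
  have hw : ∀ p q : ℤ, w (-p) (-q) = w p q := fun p q => by rw [hw1, hw2]
  have hadm : ∀ r, 1 ≤ r → r ≤ N →
      AdmissibleConvVar N w (ρx (r - 1)) (ρx r) (ρss r) ∧
        AdmissibleConvVar N w (ρy (r - 1)) (ρy r) (ρsss r) := fun r hr1 hrN => by
    rcases hcase r hr1 hrN with ⟨hx, hy⟩ | ⟨hx, hy, hneg⟩ | ⟨hx, hy, hpos⟩
    exacts [⟨Or.inl hx, Or.inl hy⟩, ⟨Or.inr (Or.inl ⟨hx, hneg⟩), Or.inr (Or.inl ⟨hy, hneg⟩)⟩,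
      ⟨Or.inr (Or.inr ⟨hx, hpos⟩), Or.inr (Or.inr ⟨hy, hpos⟩)⟩]
  have hxstage : ∀ r, 1 ≤ r → r ≤ N →
      Edisc2 N dx dy H V w (ρx r) ≤ Edisc2 N dx dy H V w (ρx (r - 1)) := fun r hr1 hrN =>
    Edisc2_le_of_row_update hdx hdy.le hdt.le hHconv hHdiff hw hr1 hrN
      (hposx (r - 1) (by omega)) (hposx r hrN) (hkeepx r hr1 hrN) (hadm r hr1 hrN).1
      (fun i hi1 hiN => hξx r hr1 hrN i r hi1 hiN hr1 hrN) (hu r hr1 hrN) (hFx r hr1 hrN)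
      (hF0 r hr1 hrN) (hFN r hr1 hrN) (hupdx r hr1 hrN)
  have hystage : ∀ r, 1 ≤ r → r ≤ N →
      Edisc2 N dx dy H V w (ρy r) ≤ Edisc2 N dx dy H V w (ρy (r - 1)) := fun r hr1 hrN =>
    Edisc2_le_of_col_update hdx.le hdy hdt.le hHconv hHdiff hw hr1 hrN
      (hposy (r - 1) (by omega)) (hposy r hrN) (hkeepy r hr1 hrN) (hadm r hr1 hrN).2
      (fun j hj1 hjN => hξy r hr1 hrN r j hr1 hrN hj1 hjN) (hv r hr1 hrN) (hGy r hr1 hrN)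
      (hG0 r hr1 hrN) (hGN r hr1 hrN) (hupdy r hr1 hrN)
  refine ⟨?_, fun r hr1 hrN => ⟨hxstage r hr1 hrN, hystage r hr1 hrN⟩⟩
  calc Edisc2 N dx dy H V w (ρy N)
      ≤ Edisc2 N dx dy H V w (ρy 0) := apply_le_apply_zero_of_le_pred hystage
    _ = Edisc2 N dx dy H V w (ρx N) := Edisc2_congr hlink
    _ ≤ Edisc2 N dx dy H V w (ρx 0) := apply_le_apply_zero_of_le_pred hxstage

/-- energy dissipation for the sweeping dimensional splitting scheme S1.
`ρx r` is the `r`-th stage of the x-sweep (only row `r` is updated at stage `r`), `ρy r`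
the `r`-th stage of the y-sweep, `ρⁿ = ρx 0`, `ρ^{n+1/2} = ρx N = ρy 0`, and
`ρⁿ⁺¹ = ρy N`.  The convolution variable at stage `r` equals `ρss r` (resp. `ρsss r`) on
the active row (resp. column) and the previous iterate elsewhere.  Assuming all iterates
at all stages are nonnegative, the discrete energy decreases at every individual stage
of both sweeps, and in particular `E_Δ(ρⁿ⁺¹) ≤ E_Δ(ρⁿ)`. -/
theorem stmt_15 (N : ℕ) (hN : 2 ≤ N) (dx dy dt : ℝ)
    (hdx : 0 < dx) (hdy : 0 < dy) (hdt : 0 < dt)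
    (H : ℝ → ℝ) (hHconv : ConvexOn ℝ Set.univ H) (hHdiff : Differentiable ℝ H)
    (V : ℕ → ℕ → ℝ) (w : ℤ → ℤ → ℝ)
    (hw1 : ∀ p q : ℤ, w (-p) q = w p q) (hw2 : ∀ p q : ℤ, w p (-q) = w p q)
    (ρx ρy ρss ρsss ξx ξy : ℕ → ℕ → ℕ → ℝ) (u v F G : ℕ → ℕ → ℝ)
    (hlink : ∀ i j, 1 ≤ i → i ≤ N → 1 ≤ j → j ≤ N → ρy 0 i j = ρx N i j)
    -- x-sweep: at stage r only row j = r is updated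
    (hkeepx : ∀ r, 1 ≤ r → r ≤ N → ∀ i j, 1 ≤ i → i ≤ N → 1 ≤ j → j ≤ N → j ≠ r →
      ρx r i j = ρx (r - 1) i j)
    (hξx : ∀ r, 1 ≤ r → r ≤ N → ∀ i j, 1 ≤ i → i ≤ N → 1 ≤ j → j ≤ N →
      ξx r i j = deriv H (ρx r i j) + V i j
        + dx * dy * ∑ k ∈ Finset.Icc 1 N, ∑ l ∈ Finset.Icc 1 N,
            w ((i : ℤ) - (k : ℤ)) ((j : ℤ) - (l : ℤ))
              * (if l = r then ρss r k l else ρx (r - 1) k l))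
    (hu : ∀ r, 1 ≤ r → r ≤ N → ∀ i, 1 ≤ i → i ≤ N - 1 →
      u r i = -(ξx r (i + 1) r - ξx r i r) / dx)
    (hFx : ∀ r, 1 ≤ r → r ≤ N → ∀ i, 1 ≤ i → i ≤ N - 1 →
      F r i = recE N dx (fun i' => ρx r i' r) i * pospart (u r i)
        + recW N dx (fun i' => ρx r i' r) (i + 1) * negpart (u r i))
    (hF0 : ∀ r, 1 ≤ r → r ≤ N → F r 0 = 0)
    (hFN : ∀ r, 1 ≤ r → r ≤ N → F r N = 0)
    (hupdx : ∀ r, 1 ≤ r → r ≤ N → ∀ i, 1 ≤ i → i ≤ N →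
      ρx r i r = ρx (r - 1) i r - dt / dx * (F r i - F r (i - 1)))
    -- y-sweep: at stage r only column i = r is updated
    (hkeepy : ∀ r, 1 ≤ r → r ≤ N → ∀ i j, 1 ≤ i → i ≤ N → 1 ≤ j → j ≤ N → i ≠ r →
      ρy r i j = ρy (r - 1) i j)
    (hξy : ∀ r, 1 ≤ r → r ≤ N → ∀ i j, 1 ≤ i → i ≤ N → 1 ≤ j → j ≤ N →
      ξy r i j = deriv H (ρy r i j) + V i j
        + dx * dy * ∑ k ∈ Finset.Icc 1 N, ∑ l ∈ Finset.Icc 1 N,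
            w ((i : ℤ) - (k : ℤ)) ((j : ℤ) - (l : ℤ))
              * (if k = r then ρsss r k l else ρy (r - 1) k l))
    (hv : ∀ r, 1 ≤ r → r ≤ N → ∀ j, 1 ≤ j → j ≤ N - 1 →
      v r j = -(ξy r r (j + 1) - ξy r r j) / dy)
    (hGy : ∀ r, 1 ≤ r → r ≤ N → ∀ j, 1 ≤ j → j ≤ N - 1 →
      G r j = recE N dy (fun j' => ρy r r j') j * pospart (v r j)
        + recW N dy (fun j' => ρy r r j') (j + 1) * negpart (v r j))
    (hG0 : ∀ r, 1 ≤ r → r ≤ N → G r 0 = 0)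
    (hGN : ∀ r, 1 ≤ r → r ≤ N → G r N = 0)
    (hupdy : ∀ r, 1 ≤ r → r ≤ N → ∀ j, 1 ≤ j → j ≤ N →
      ρy r r j = ρy (r - 1) r j - dt / dy * (G r j - G r (j - 1)))
    -- all iterates at all stages are nonnegative
    (hposx : ∀ r, r ≤ N → ∀ i j, 1 ≤ i → i ≤ N → 1 ≤ j → j ≤ N → 0 ≤ ρx r i j)
    (hposy : ∀ r, r ≤ N → ∀ i j, 1 ≤ i → i ≤ N → 1 ≤ j → j ≤ N → 0 ≤ ρy r i j)
    -- admissible choice of the convolution variables, possibly different at each stage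
    (hcase : ∀ r, 1 ≤ r → r ≤ N →
      ((∀ k l, 1 ≤ k → k ≤ N → 1 ≤ l → l ≤ N →
          ρss r k l = (ρx r k l + ρx (r - 1) k l) / 2) ∧
        (∀ k l, 1 ≤ k → k ≤ N → 1 ≤ l → l ≤ N →
          ρsss r k l = (ρy r k l + ρy (r - 1) k l) / 2)) ∨
      ((∀ k l, 1 ≤ k → k ≤ N → 1 ≤ l → l ≤ N → ρss r k l = ρx (r - 1) k l) ∧
        (∀ k l, 1 ≤ k → k ≤ N → 1 ≤ l → l ≤ N → ρsss r k l = ρy (r - 1) k l) ∧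
        NegDefKer2 N w) ∨
      ((∀ k l, 1 ≤ k → k ≤ N → 1 ≤ l → l ≤ N → ρss r k l = ρx r k l) ∧
        (∀ k l, 1 ≤ k → k ≤ N → 1 ≤ l → l ≤ N → ρsss r k l = ρy r k l) ∧
        PosDefKer2 N w)) :
    Edisc2 N dx dy H V w (ρy N) ≤ Edisc2 N dx dy H V w (ρx 0) ∧
    (∀ r, 1 ≤ r → r ≤ N →
      Edisc2 N dx dy H V w (ρx r) ≤ Edisc2 N dx dy H V w (ρx (r - 1)) ∧
      Edisc2 N dx dy H V w (ρy r) ≤ Edisc2 N dx dy H V w (ρy (r - 1))) :=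
  stmt_15_general N dx dy dt hdx hdy hdt H hHconv hHdiff V w hw1 hw2 ρx ρy ρss ρsss ξx ξy u v F G
    hlink hkeepx hξx hu hFx hF0 hFN hupdx hkeepy hξy hv hGy hG0 hGN hupdy hposx hposy hcase
end

section
/- (Unconditional positivity of the sweeping dimensional splitting scheme S2.) Let N ≥ 2, Δx, Δy, Δt > 0. Consider matrices ρ^{n,(0)}, …, ρ^{n,(N)} ∈ ℝ^{N×N} and ρ^{n+1/2,(0)}, …, ρ^{n+1/2,(N)} ∈ ℝ^{N×N} with ρ^{n+1/2,(0)} = ρ^{n,(N)}, such that: (x-sweep) for each r = 1,…,N, all rows j ≠ r of ρ^{n,(r)} equal those of ρ^{n,(r−1)}, and row r satisfies ρ^{n,(r)}_{i,r} = ρ^{n,(r−1)}_{i,r} − (Δt/Δx)(F^{(r)}_{i+1/2,r} − F^{(r)}_{i−1/2,r}), where F^{(r)}_{i+1/2,r} = ρ^{n,(r)}_{i,r}(u^{(r)}_{i+1/2,r})⁺ + ρ^{n,(r)}_{i+1,r}(u^{(r)}_{i+1/2,r})⁻ for 1 ≤ i ≤ N−1 with zero boundary fluxes and arbitrary real velocities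 u^{(r)}_{i+1/2,r}; (y-sweep) for each r = 1,…,N, all columns i ≠ r of ρ^{n+1/2,(r)} equal those of ρ^{n+1/2,(r−1)}, and column r satisfies ρ^{n+1/2,(r)}_{r,j} = ρ^{n+1/2,(r−1)}_{r,j} − (Δt/Δy)(G^{(r)}_{r,j+1/2} − G^{(r)}_{r,j−1/2}), where G^{(r)}_{r,j+1/2} = ρ^{n+1/2,(r)}_{r,j}(v^{(r)}_{r,j+1/2})⁺ + ρ^{n+1/2,(r)}_{r,j+1}(v^{(r)}_{r,j+1/2})⁻ with zero boundary fluxes and arbitrary real velocities. If ρ^{n,(0)}_{ij} ≥ 0 for all i,j, then ρ^{n+1} := ρ^{n+1/2,(N)} has all entries ≥ 0, with no restriction on Δt, Δx, Δy, or the velocities. -/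
open Finset

noncomputable def negIndicator (z : ℝ) : ℝ := if z < 0 then 1 else 0

lemma negIndicator_mul_self (z : ℝ) : negIndicator z * z = negpart z := by
  unfold negIndicator negpart
  split_ifs with h
  · rw [one_mul, min_eq_left h.le]
  · rw [zero_mul, min_eq_right (not_lt.1 h)]

lemma negpart_le_negIndicator_mul (z w : ℝ) : negpart w ≤ negIndicator z * w := by
  unfold negIndicator negpart
  split_ifs <;> simp

lemma negIndicator_sub_mul_upwindFlux_nonpos (a b u : ℝ) :
    (negIndicator a - negIndicator b) * (a * pospart u + b * negpart u) ≤ 0 := by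
  have hp : 0 ≤ pospart u := le_max_right _ _
  have hn : negpart u ≤ 0 := min_le_right _ _
  unfold negIndicator
  split_ifs <;> nlinarith

lemma sum_range_mul_sub_eq_of_boundary_zero (N : ℕ) (χ F : ℕ → ℝ) (hF0 : F 0 = 0)
    (hFN : F N = 0) :
    ∑ i ∈ range N, χ (i + 1) * (F (i + 1) - F i) = ∑ i ∈ range N, (χ i - χ (i + 1)) * F i := by
  have hshift := sum_range_succ' (fun i => χ i * F i) N
  have hlast := sum_range_succ (fun i => χ i * F i) N
  simp only [hF0, hFN, mul_zero, add_zero] at hshift hlast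
  simp only [mul_sub, sub_mul, sum_sub_distrib]
  linarith

section ImplicitUpwind

variable {N : ℕ} {c : ℝ} {ρ w u F : ℕ → ℝ}

lemma sum_negpart_le_of_implicitUpwind (hc : 0 ≤ c)
    (hF : ∀ i, 1 ≤ i → i ≤ N - 1 → F i = ρ i * pospart (u i) + ρ (i + 1) * negpart (u i))
    (hF0 : F 0 = 0) (hFN : F N = 0)
    (hupd : ∀ i, 1 ≤ i → i ≤ N → ρ i = w i - c * (F i - F (i - 1))) :
    ∑ i ∈ range N, negpart (w (i + 1)) ≤ ∑ i ∈ range N, negpart (ρ (i + 1)) := by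
  set χ := fun i => negIndicator (ρ i)
  have hflux : ∑ i ∈ range N, χ (i + 1) * (F (i + 1) - F i) ≤ 0 := by
    rw [sum_range_mul_sub_eq_of_boundary_zero N χ F hF0 hFN]
    refine sum_nonpos fun i hi => ?_
    rcases Nat.eq_zero_or_pos i with rfl | hi0
    · rw [hF0, mul_zero]
    · rw [hF i hi0 (by rw [mem_range] at hi; omega)]
      exact negIndicator_sub_mul_upwindFlux_nonpos _ _ _
  calc ∑ i ∈ range N, negpart (w (i + 1))
      ≤ ∑ i ∈ range N, χ (i + 1) * w (i + 1) :=
        sum_le_sum fun i _ => negpart_le_negIndicator_mul _ _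
    _ ≤ ∑ i ∈ range N, χ (i + 1) * w (i + 1) - c * ∑ i ∈ range N, χ (i + 1) * (F (i + 1) - F i) :=
        le_sub_self_iff _ |>.2 (mul_nonpos_of_nonneg_of_nonpos hc hflux)
    _ = ∑ i ∈ range N, χ (i + 1) * ρ (i + 1) := by
        rw [mul_sum, ← sum_sub_distrib]
        refine sum_congr rfl fun i hi => ?_
        rw [hupd (i + 1) (by omega) (by rw [mem_range] at hi; omega), Nat.add_sub_cancel]
        ring
    _ = ∑ i ∈ range N, negpart (ρ (i + 1)) := by
        simp only [χ, negIndicator_mul_self]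

lemma nonneg_of_implicitUpwind (hc : 0 ≤ c)
    (hF : ∀ i, 1 ≤ i → i ≤ N - 1 → F i = ρ i * pospart (u i) + ρ (i + 1) * negpart (u i))
    (hF0 : F 0 = 0) (hFN : F N = 0)
    (hupd : ∀ i, 1 ≤ i → i ≤ N → ρ i = w i - c * (F i - F (i - 1)))
    (hw : ∀ i, 1 ≤ i → i ≤ N → 0 ≤ w i) :
    ∀ i, 1 ≤ i → i ≤ N → 0 ≤ ρ i := by
  have hw_negpart : ∑ i ∈ range N, negpart (w (i + 1)) = 0 :=
    sum_eq_zero fun i hi => min_eq_right (hw (i + 1) (by omega) (by rw [mem_range] at hi; omega))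
  have hρ_negpart := (sum_eq_zero_iff_of_nonpos fun i _ => min_le_right (ρ (i + 1)) 0).1 <|
    le_antisymm (sum_nonpos fun i _ => min_le_right _ _)
      (hw_negpart ▸ sum_negpart_le_of_implicitUpwind hc hF hF0 hFN hupd)
  intro i hi1 hiN
  obtain ⟨k, rfl⟩ := Nat.exists_eq_add_of_le' hi1
  exact min_eq_right_iff.1 (hρ_negpart k (mem_range.2 (by omega)))

end ImplicitUpwind

lemma rowSweep_nonneg (N : ℕ) (c : ℝ) (hc : 0 ≤ c) (σ : ℕ → ℕ → ℕ → ℝ) (u F : ℕ → ℕ → ℝ)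
    (hkeep : ∀ r, 1 ≤ r → r ≤ N → ∀ i j, 1 ≤ i → i ≤ N → 1 ≤ j → j ≤ N → j ≠ r →
      σ r i j = σ (r - 1) i j)
    (hF : ∀ r, 1 ≤ r → r ≤ N → ∀ i, 1 ≤ i → i ≤ N - 1 →
      F r i = σ r i r * pospart (u r i) + σ r (i + 1) r * negpart (u r i))
    (hF0 : ∀ r, 1 ≤ r → r ≤ N → F r 0 = 0)
    (hFN : ∀ r, 1 ≤ r → r ≤ N → F r N = 0)
    (hupd : ∀ r, 1 ≤ r → r ≤ N → ∀ i, 1 ≤ i → i ≤ N →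
      σ r i r = σ (r - 1) i r - c * (F r i - F r (i - 1)))
    (h0 : ∀ i j, 1 ≤ i → i ≤ N → 1 ≤ j → j ≤ N → 0 ≤ σ 0 i j) :
    ∀ r ≤ N, ∀ i j, 1 ≤ i → i ≤ N → 1 ≤ j → j ≤ N → 0 ≤ σ r i j := by
  intro r
  induction r with
  | zero => exact fun _ => h0
  | succ r ih =>
    intro hr i j hi1 hiN hj1 hjN
    by_cases hj : j = r + 1
    · subst hj
      exact nonneg_of_implicitUpwind hc (hF _ (by omega) hr) (hF0 _ (by omega) hr)
        (hFN _ (by omega) hr) (hupd _ (by omega) hr)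
        (fun i hi1 hiN => ih (by omega) i (r + 1) hi1 hiN (by omega) hr) i hi1 hiN
    · rw [hkeep (r + 1) (by omega) hr i j hi1 hiN hj1 hjN hj]
      exact ih (by omega) i j hi1 hiN hj1 hjN

theorem stmt_16_general (N : ℕ) (dx dy dt : ℝ)
    (hdx : 0 < dx) (hdy : 0 < dy) (hdt : 0 < dt)
    (ρx ρy : ℕ → ℕ → ℕ → ℝ) (u v F G : ℕ → ℕ → ℝ)
    (hlink : ∀ i j, 1 ≤ i → i ≤ N → 1 ≤ j → j ≤ N → ρy 0 i j = ρx N i j)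
    -- x-sweep: at stage r only row j = r is updated, implicitly
    (hkeepx : ∀ r, 1 ≤ r → r ≤ N → ∀ i j, 1 ≤ i → i ≤ N → 1 ≤ j → j ≤ N → j ≠ r →
      ρx r i j = ρx (r - 1) i j)
    (hFx : ∀ r, 1 ≤ r → r ≤ N → ∀ i, 1 ≤ i → i ≤ N - 1 →
      F r i = ρx r i r * pospart (u r i) + ρx r (i + 1) r * negpart (u r i))
    (hF0 : ∀ r, 1 ≤ r → r ≤ N → F r 0 = 0)
    (hFN : ∀ r, 1 ≤ r → r ≤ N → F r N = 0)
    (hupdx : ∀ r, 1 ≤ r → r ≤ N → ∀ i, 1 ≤ i → i ≤ N →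
      ρx r i r = ρx (r - 1) i r - dt / dx * (F r i - F r (i - 1)))
    -- y-sweep: at stage r only column i = r is updated, implicitly
    (hkeepy : ∀ r, 1 ≤ r → r ≤ N → ∀ i j, 1 ≤ i → i ≤ N → 1 ≤ j → j ≤ N → i ≠ r →
      ρy r i j = ρy (r - 1) i j)
    (hGy : ∀ r, 1 ≤ r → r ≤ N → ∀ j, 1 ≤ j → j ≤ N - 1 →
      G r j = ρy r r j * pospart (v r j) + ρy r r (j + 1) * negpart (v r j))
    (hG0 : ∀ r, 1 ≤ r → r ≤ N → G r 0 = 0)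
    (hGN : ∀ r, 1 ≤ r → r ≤ N → G r N = 0)
    (hupdy : ∀ r, 1 ≤ r → r ≤ N → ∀ j, 1 ≤ j → j ≤ N →
      ρy r r j = ρy (r - 1) r j - dt / dy * (G r j - G r (j - 1)))
    (hpos : ∀ i j, 1 ≤ i → i ≤ N → 1 ≤ j → j ≤ N → 0 ≤ ρx 0 i j) :
    ∀ i j, 1 ≤ i → i ≤ N → 1 ≤ j → j ≤ N → 0 ≤ ρy N i j := by
  have hx := rowSweep_nonneg N (dt / dx) (by positivity) ρx u F hkeepx hFx hF0 hFN hupdx hpos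
    N le_rfl
  have hy := rowSweep_nonneg N (dt / dy) (by positivity) (fun r i j => ρy r j i) v G
    (fun r hr1 hrN i j hi1 hiN hj1 hjN hj => hkeepy r hr1 hrN j i hj1 hjN hi1 hiN hj)
    hGy hG0 hGN hupdy
    (fun i j hi1 hiN hj1 hjN => hlink j i hj1 hjN hi1 hiN ▸ hx j i hj1 hjN hi1 hiN) N le_rfl
  exact fun i j hi1 hiN hj1 hjN => hy j i hj1 hjN hi1 hiN

/-- unconditional positivity of the sweeping dimensional splitting scheme
S2, for arbitrary interface velocities, with no restriction on `Δt`, `Δx`, `Δy`, or the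
velocities.  `ρx r` is the `r`-th stage of the x-sweep (only row `r` is updated at stage
`r`), `ρy r` the `r`-th stage of the y-sweep, and `ρⁿ⁺¹ = ρy N`. -/
theorem stmt_16 (N : ℕ) (hN : 2 ≤ N) (dx dy dt : ℝ)
    (hdx : 0 < dx) (hdy : 0 < dy) (hdt : 0 < dt)
    (ρx ρy : ℕ → ℕ → ℕ → ℝ) (u v F G : ℕ → ℕ → ℝ)
    (hlink : ∀ i j, 1 ≤ i → i ≤ N → 1 ≤ j → j ≤ N → ρy 0 i j = ρx N i j)
    -- x-sweep: at stage r only row j = r is updated, implicitly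
    (hkeepx : ∀ r, 1 ≤ r → r ≤ N → ∀ i j, 1 ≤ i → i ≤ N → 1 ≤ j → j ≤ N → j ≠ r →
      ρx r i j = ρx (r - 1) i j)
    (hFx : ∀ r, 1 ≤ r → r ≤ N → ∀ i, 1 ≤ i → i ≤ N - 1 →
      F r i = ρx r i r * pospart (u r i) + ρx r (i + 1) r * negpart (u r i))
    (hF0 : ∀ r, 1 ≤ r → r ≤ N → F r 0 = 0)
    (hFN : ∀ r, 1 ≤ r → r ≤ N → F r N = 0)
    (hupdx : ∀ r, 1 ≤ r → r ≤ N → ∀ i, 1 ≤ i → i ≤ N →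
      ρx r i r = ρx (r - 1) i r - dt / dx * (F r i - F r (i - 1)))
    -- y-sweep: at stage r only column i = r is updated, implicitly
    (hkeepy : ∀ r, 1 ≤ r → r ≤ N → ∀ i j, 1 ≤ i → i ≤ N → 1 ≤ j → j ≤ N → i ≠ r →
      ρy r i j = ρy (r - 1) i j)
    (hGy : ∀ r, 1 ≤ r → r ≤ N → ∀ j, 1 ≤ j → j ≤ N - 1 →
      G r j = ρy r r j * pospart (v r j) + ρy r r (j + 1) * negpart (v r j))
    (hG0 : ∀ r, 1 ≤ r → r ≤ N → G r 0 = 0)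
    (hGN : ∀ r, 1 ≤ r → r ≤ N → G r N = 0)
    (hupdy : ∀ r, 1 ≤ r → r ≤ N → ∀ j, 1 ≤ j → j ≤ N →
      ρy r r j = ρy (r - 1) r j - dt / dy * (G r j - G r (j - 1)))
    (hpos : ∀ i j, 1 ≤ i → i ≤ N → 1 ≤ j → j ≤ N → 0 ≤ ρx 0 i j) :
    ∀ i j, 1 ≤ i → i ≤ N → 1 ≤ j → j ≤ N → 0 ≤ ρy N i j :=
  stmt_16_general N dx dy dt hdx hdy hdt ρx ρy u v F G hlink hkeepx hFx hF0 hFN hupdx hkeepy hGy hG0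
    hGN hupdy hpos
end
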